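/- arXiv:1201.0738 — 4 statements merged into one kernel-verified Lean document; each statement's English description precedes it below -/
import Mathlib

section
/- Let J_n be the Schwarz matrix with parameters b_0, ..., b_{n-1} and characteristic polynomial p(z) = p_0(z²) + z·p_1(z²), where p_0 and p_1 collect the even and odd parts. Then the polynomial q(z) = (-1)^⌊(n+1)/2⌋·(p_0(-z²) + (-1)ⁿ·z·p_1(-z²)) is the characteristic polynomial of the n×n matrix K_n with K(1,1) = b_0, K(i,i+1) = 1, K(i+1,i) = b_i, and zeros elsewhere. -/
open Polynomial Matrix

/-- The Schwarz matrix `J_n` with parameters `b 0, …, b (n-1)`: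
`J(1,1) = -b₀` (1-based), superdiagonal `1`, subdiagonal `-b₁, …, -b_{n-1}`. -/
def schwarzMatrix {n : ℕ} (b : Fin n → ℝ) : Matrix (Fin n) (Fin n) ℝ :=
  Matrix.of fun i j : Fin n =>
    if (i : ℕ) = 0 ∧ (j : ℕ) = 0 then -b i
    else if (i : ℕ) + 1 = (j : ℕ) then 1
    else if (i : ℕ) = (j : ℕ) + 1 then -b i
    else 0

/-- The multiset of complex roots of a real polynomial. -/
noncomputable def cRoots (p : Polynomial ℝ) : Multiset ℂ :=
  (p.map (algebraMap ℝ ℂ)).roots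

/-!
Expanding `det (X - J_n)` along the last row gives the three-term recurrence
`χ_{k+2} = X χ_{k+1} + b_{k+1} χ_k`, `χ_1 = X + b_0`. Induction along it shows that changing the
signs of all `b_i` multiplies the coefficient of `X^k` in `χ_n` by `(-1)^⌊(n+1-k)/2⌋`. The
coefficients of `p₀(-z²)` and `z p₁(-z²)` are those of `p` in even and odd degree, twisted by
exactly these signs once the factor `(-1)^⌊(n+1)/2⌋` is pulled out.
-/

namespace Polynomial

variable {R : Type*}

section CommSemiring
variable [CommSemiring R]

lemma coeff_expand_two_mul_add_one (f : R[X]) (j : ℕ) :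
    (expand R 2 f).coeff (2 * j + 1) = 0 := by
  rw [coeff_expand two_pos, if_neg (by omega)]

lemma coeff_X_mul_expand_two_mul (f : R[X]) (j : ℕ) :
    (X * expand R 2 f).coeff (2 * j) = 0 := by
  cases j with
  | zero => exact coeff_X_mul_zero _
  | succ j => rw [Nat.mul_succ, coeff_X_mul, coeff_expand_two_mul_add_one]

lemma coeff_X_mul_expand_two_mul_add_one (f : R[X]) (j : ℕ) :
    (X * expand R 2 f).coeff (2 * j + 1) = f.coeff j := by
  rw [coeff_X_mul, coeff_expand_mul' two_pos]

end CommSemiring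

section CommRing
variable [CommRing R]

lemma coeff_comp_neg_X (p : R[X]) (j : ℕ) : (p.comp (-X)).coeff j = (-1) ^ j * p.coeff j := by
  rw [← neg_one_mul (X : R[X]), ← C_1, ← C_neg, comp_C_mul_X_coeff, mul_comm]

lemma comp_neg_X_sq (p : R[X]) : p.comp (-X ^ 2) = expand R 2 (p.comp (-X)) := by
  rw [expand_eq_comp_X_pow, comp_assoc, neg_comp, X_comp]

end CommRing

end Polynomial

lemma Matrix.charmatrix_submatrix {R m n : Type*} [CommRing R] [Fintype m] [Fintype n]
    [DecidableEq m] [DecidableEq n] (M : Matrix n n R) {f : m → n} (hf : Function.Injective f) :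
    (charmatrix M).submatrix f f = charmatrix (M.submatrix f f) := by
  ext i j
  rcases eq_or_ne i j with rfl | h
  · simp [charmatrix_apply_eq]
  · rw [submatrix_apply, charmatrix_apply_ne _ _ _ (hf.ne h), charmatrix_apply_ne _ _ _ h,
      submatrix_apply]

section SchwarzMatrix

variable {n : ℕ}

lemma schwarzMatrix_submatrix_castSucc (b : Fin (n + 1) → ℝ) :
    (schwarzMatrix b).submatrix Fin.castSucc Fin.castSucc = schwarzMatrix (b ∘ Fin.castSucc) := by
  ext i j
  simp only [schwarzMatrix, Matrix.submatrix_apply, Matrix.of_apply, Function.comp_apply,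
    Fin.val_castSucc]

lemma charpoly_schwarzMatrix_one (b : Fin 1 → ℝ) :
    (schwarzMatrix b).charpoly = X + C (b 0) := by
  simp [Matrix.charpoly, schwarzMatrix, charmatrix_apply_eq, sub_eq_add_neg]

lemma charmatrix_schwarzMatrix_last_apply (b : Fin (n + 2) → ℝ) (j : Fin (n + 2)) :
    charmatrix (schwarzMatrix b) (Fin.last _) j =
      if j = Fin.last _ then X
      else if j = (Fin.last n).castSucc then C (b (Fin.last _)) else 0 := by
  simp only [charmatrix_apply, schwarzMatrix, Matrix.diagonal_apply, Matrix.of_apply, Fin.ext_iff,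
    Fin.val_last, Fin.val_castSucc]
  split_ifs <;> first | omega | simp_all

lemma charmatrix_schwarzMatrix_apply_last (b : Fin (n + 2) → ℝ) (i : Fin (n + 1)) :
    charmatrix (schwarzMatrix b) i.castSucc (Fin.last _) = if i = Fin.last n then -1 else 0 := by
  simp only [charmatrix_apply, schwarzMatrix, Matrix.diagonal_apply, Matrix.of_apply, Fin.ext_iff,
    Fin.val_last, Fin.val_castSucc]
  split_ifs <;> first | omega | simp_all

lemma charmatrix_schwarzMatrix_submatrix_castSucc (b : Fin (n + 1) → ℝ) :
    (charmatrix (schwarzMatrix b)).submatrix Fin.castSucc Fin.castSucc =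
      charmatrix (schwarzMatrix (b ∘ Fin.castSucc)) := by
  rw [Matrix.charmatrix_submatrix _ (Fin.castSucc_injective _), schwarzMatrix_submatrix_castSucc]

lemma charpoly_schwarzMatrix_succ_succ (b : Fin (n + 2) → ℝ) :
    (schwarzMatrix b).charpoly = X * (schwarzMatrix (b ∘ Fin.castSucc)).charpoly +
      C (b (Fin.last _)) * (schwarzMatrix (b ∘ Fin.castSucc ∘ Fin.castSucc)).charpoly := by
  have hskip : (Fin.last n).castSucc.succAbove ∘ Fin.castSucc =
      Fin.castSucc ∘ (Fin.castSucc : Fin n → Fin (n + 1)) :=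
    funext fun j => Fin.succAbove_of_castSucc_lt _ _
      (Fin.castSucc_lt_castSucc_iff.mpr (Fin.castSucc_lt_last j))
  -- the minor of the subdiagonal entry has a single nonzero entry, `-1`, in its last column
  have hcross : ((charmatrix (schwarzMatrix b)).submatrix Fin.castSucc
      (Fin.last n).castSucc.succAbove).det =
      -(schwarzMatrix (b ∘ Fin.castSucc ∘ Fin.castSucc)).charpoly := by
    rw [det_succ_column _ (Fin.last n), Fintype.sum_eq_single (Fin.last n)]
    · rw [Fin.succAbove_last, submatrix_submatrix, hskip, ← submatrix_submatrix,
        charmatrix_schwarzMatrix_submatrix_castSucc, charmatrix_schwarzMatrix_submatrix_castSucc,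
        submatrix_apply, Fin.succAbove_castSucc_self, Fin.succ_last,
        charmatrix_schwarzMatrix_apply_last, if_pos rfl, ← two_mul, pow_mul]
      simp [Matrix.charpoly, Function.comp_assoc]
    · intro i hi
      rw [submatrix_apply, Fin.succAbove_castSucc_self, Fin.succ_last,
        charmatrix_schwarzMatrix_apply_last, if_neg hi, mul_zero, zero_mul]
  rw [Matrix.charpoly, det_succ_row _ (Fin.last _),
    Fintype.sum_eq_add (Fin.last _) (Fin.last n).castSucc (Fin.castSucc_lt_last _).ne']
  · rw [charmatrix_schwarzMatrix_last_apply, charmatrix_schwarzMatrix_last_apply, if_pos rfl,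
      if_neg (Fin.castSucc_lt_last _).ne, if_pos rfl, Fin.succAbove_last, hcross,
      charmatrix_schwarzMatrix_submatrix_castSucc]
    simp [Matrix.charpoly]
  · intro j hj
    rw [charmatrix_schwarzMatrix_last_apply, if_neg hj.1, if_neg hj.2, mul_zero, zero_mul]

theorem coeff_charpoly_schwarzMatrix_neg (b : Fin n → ℝ) (k : ℕ) :
    (schwarzMatrix fun i => -b i).charpoly.coeff k =
      (-1) ^ ((n + 1 - k) / 2) * (schwarzMatrix b).charpoly.coeff k := by
  induction n using Nat.twoStepInduction generalizing k with
  | zero =>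
    rcases k with _ | k <;> simp [charpoly_isEmpty, coeff_one]
  | one =>
    rw [charpoly_schwarzMatrix_one, charpoly_schwarzMatrix_one]
    rcases k with _ | _ | k <;> simp [coeff_X, coeff_C]
  | more m ih₀ ih₁ =>
    simp only [charpoly_schwarzMatrix_succ_succ, Function.comp_def, coeff_add, coeff_C_mul]
    cases k with
    | zero =>
      simp only [mul_coeff_zero, coeff_X_zero, zero_mul, zero_add]
      rw [ih₀, show (m + 2 + 1 - 0) / 2 = (m + 1 - 0) / 2 + 1 by omega, pow_succ]
      ring
    | succ k =>
      rw [coeff_X_mul, coeff_X_mul, ih₁, ih₀, show m + 2 + 1 - (k + 1) = m + 1 + 1 - k by omega]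
      rcases le_or_gt (k + 1) m with hk | hk
      · rw [show (m + 1 + 1 - k) / 2 = (m + 1 - (k + 1)) / 2 + 1 by omega, pow_succ]
        ring
      · have hdeg :
            (schwarzMatrix fun i : Fin m => b i.castSucc.castSucc).charpoly.natDegree < k + 1 := by
          rwa [charpoly_natDegree_eq_dim, Fintype.card_fin]
        rw [coeff_eq_zero_of_natDegree_lt hdeg]
        ring

theorem coeff_charpoly_schwarzMatrix_neg_of_mod_two (b : Fin n → ℝ) {k e : ℕ}
    (he : k ≤ n → (n + 1 - k) / 2 % 2 = e % 2) :
    (schwarzMatrix fun i => -b i).charpoly.coeff k =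
      (-1) ^ e * (schwarzMatrix b).charpoly.coeff k := by
  rw [coeff_charpoly_schwarzMatrix_neg]
  rcases le_or_gt k n with hk | hk
  · rw [neg_one_pow_eq_pow_mod_two, he hk, ← neg_one_pow_eq_pow_mod_two]
  · rw [coeff_eq_zero_of_natDegree_lt (by simpa using hk), mul_zero, mul_zero]

end SchwarzMatrix

theorem schwarz_stmt3_general {n : ℕ} (b : Fin n → ℝ)
    (p0 p1 : Polynomial ℝ)
    (hp : (schwarzMatrix b).charpoly =
      p0.comp (Polynomial.X ^ 2) + Polynomial.X * p1.comp (Polynomial.X ^ 2)) :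
    (schwarzMatrix fun i => -b i).charpoly =
      Polynomial.C ((-1 : ℝ) ^ ((n + 1) / 2)) *
        (p0.comp (-(Polynomial.X ^ 2)) +
          Polynomial.C ((-1 : ℝ) ^ n) * (Polynomial.X * p1.comp (-(Polynomial.X ^ 2)))) := by
  simp only [← expand_eq_comp_X_pow] at hp
  rw [comp_neg_X_sq, comp_neg_X_sq]
  ext k
  obtain ⟨j, rfl | rfl⟩ := Nat.even_or_odd' k
  · rw [coeff_charpoly_schwarzMatrix_neg_of_mod_two b (e := (n + 1) / 2 + j) (by omega), hp]
    simp only [coeff_add, coeff_C_mul, coeff_expand_mul' two_pos, coeff_X_mul_expand_two_mul,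
      coeff_comp_neg_X]
    ring
  · have he : 2 * j + 1 ≤ n → (n + 1 - (2 * j + 1)) / 2 % 2 = ((n + 1) / 2 + n + j) % 2 := by
      obtain ⟨m, rfl | rfl⟩ := Nat.even_or_odd' n <;> omega
    rw [coeff_charpoly_schwarzMatrix_neg_of_mod_two b he, hp]
    simp only [coeff_add, coeff_C_mul, coeff_X_mul_expand_two_mul_add_one,
      coeff_expand_two_mul_add_one, coeff_comp_neg_X]
    ring

/-- if `p(z) = p₀(z²) + z·p₁(z²)` is the characteristic polynomial of the
Schwarz matrix `J_n`, then `q(z) = (-1)^⌊(n+1)/2⌋·(p₀(-z²) + (-1)ⁿ·z·p₁(-z²))` is the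
characteristic polynomial of the matrix `K_n` obtained by changing the signs of all
the parameters (i.e. `K(1,1) = b₀`, superdiagonal `1`, subdiagonal `b₁, …, b_{n-1}`). -/
theorem schwarz_stmt3 {n : ℕ} (hn : 0 < n) (b : Fin n → ℝ) (hb : ∀ i, b i ≠ 0)
    (p0 p1 : Polynomial ℝ)
    (hp : (schwarzMatrix b).charpoly =
      p0.comp (Polynomial.X ^ 2) + Polynomial.X * p1.comp (Polynomial.X ^ 2)) :
    (schwarzMatrix fun i => -b i).charpoly =
      Polynomial.C ((-1 : ℝ) ^ ((n + 1) / 2)) *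
        (p0.comp (-(Polynomial.X ^ 2)) +
          Polynomial.C ((-1 : ℝ) ^ n) * (Polynomial.X * p1.comp (-(Polynomial.X ^ 2)))) :=
  schwarz_stmt3_general b p0 p1 hp
end

section
/- Let p be a real monic polynomial of even degree n = 2l, and let A_n be the n×n matrix with A(i,i+1) = 1, A(i+1,i) = -b_i for 1 ≤ i ≤ n-1, diagonal zero, where the b_i come from the Schwarz matrix J_n (with additionally J(1,1) = -b_0) whose characteristic polynomial is p. Write p(z) = p_0(z²) + z·p_1(z²). Then p_0(z²) = det(zI_n - A_n) and z·p_1(z²) = b_0·det(zI_{n-1} - A_{n-1}), where A_{n-1} is the trailing principal (n-1)×(n-1) submatrix of A_n. -/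
open Polynomial Matrix

/-- The auxiliary matrix `A_n`: the Schwarz matrix with its `(1,1)` entry replaced by `0`. -/
def schwarzAux {n : ℕ} (b : Fin n → ℝ) : Matrix (Fin n) (Fin n) ℝ :=
  Matrix.of fun i j : Fin n =>
    if (i : ℕ) + 1 = (j : ℕ) then 1
    else if (i : ℕ) = (j : ℕ) + 1 then -b i
    else 0

/-- The trailing principal submatrix obtained by deleting the first row and column. -/
def trailing {n : ℕ} (M : Matrix (Fin n) (Fin n) ℝ) : Matrix (Fin (n - 1)) (Fin (n - 1)) ℝ :=
  M.submatrix (fun i => ⟨(i : ℕ) + 1, by have := i.isLt; omega⟩)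
    (fun j => ⟨(j : ℕ) + 1, by have := j.isLt; omega⟩)

/-!
Write `J = A + E`, where `E` has the single nonzero entry `-b₀` in the corner `(1,1)`. Expanding
`det (zI - J)` along the first row, only the corner term changes, so
`det (zI - J) = det (zI - A) + b₀ · det (zI - A_{n-1})`. Both `A` and its trailing submatrix
have nonzero entries only where `i + j` is odd, so conjugation by `diag ((-1)^i)` sends them to
their negatives; hence their characteristic polynomials are even, resp. odd, according to the
parity of their size. For even `n` the first summand is even and the second odd, and the
decomposition of a polynomial into even and odd parts is unique.
-/

namespace Polynomial

variable {R : Type*} [CommRing R]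

theorem comp_X_sq_comp_neg_X (p : R[X]) : (p.comp (X ^ 2)).comp (-X) = p.comp (X ^ 2) := by
  rw [comp_assoc, X_pow_comp, neg_sq]

theorem X_mul_comp_X_sq_comp_neg_X (p : R[X]) :
    (X * p.comp (X ^ 2)).comp (-X) = -(X * p.comp (X ^ 2)) := by
  rw [mul_comp, X_comp, comp_X_sq_comp_neg_X, neg_mul]

theorem eq_and_eq_of_add_eq_add_of_comp_neg_X [NoZeroDivisors R] [CharZero R]
    {f g f' g' : R[X]} (hf : f.comp (-X) = f) (hf' : f'.comp (-X) = f')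
    (hg : g.comp (-X) = -g) (hg' : g'.comp (-X) = -g') (h : f + g = f' + g') :
    f = f' ∧ g = g' := by
  have hdiff : f - f' = g' - g := by linear_combination h
  have hself_neg : f - f' = -(f - f') :=
    calc f - f' = (f - f').comp (-X) := by rw [sub_comp, hf, hf']
      _ = (g' - g).comp (-X) := by rw [hdiff]
      _ = -(f - f') := by rw [sub_comp, hg, hg', hdiff]; ring
  have hf_eq : f = f' := sub_eq_zero.mp (self_eq_neg.mp hself_neg)
  exact ⟨hf_eq, by linear_combination h - hf_eq⟩

end Polynomial

namespace Matrix

variable {R : Type*} [CommRing R]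

theorem det_add_single_zero_zero {m : ℕ} (A : Matrix (Fin (m + 1)) (Fin (m + 1)) R) (x : R) :
    (A + single 0 0 x).det = A.det + x * (A.submatrix Fin.succ Fin.succ).det := by
  have hminor (j : Fin (m + 1)) :
      (A + single 0 0 x).submatrix Fin.succ j.succAbove = A.submatrix Fin.succ j.succAbove := by
    ext i k
    simp [single_apply_of_row_ne (Fin.succ_ne_zero i).symm]
  rw [det_succ_row_zero, det_succ_row_zero A, Fin.sum_univ_succ, Fin.sum_univ_succ]
  simp only [hminor]
  simp only [Matrix.add_apply, single_apply_same,
    single_apply_of_col_ne _ _ (Fin.succ_ne_zero _).symm, add_zero, Fin.succAbove_zero,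
    Fin.val_zero, pow_zero]
  ring

variable {n : Type*} [DecidableEq n] [Fintype n]

theorem charmatrix_add (M N : Matrix n n R) : charmatrix (M + N) = charmatrix M - N.map C := by
  simp only [charmatrix, map_add, RingHom.mapMatrix_apply]
  abel

theorem charmatrix_submatrix_s4 {m : Type*} [DecidableEq m] [Fintype m] (M : Matrix n n R)
    {e : m → n} (he : Function.Injective e) :
    charmatrix (M.submatrix e e) = (charmatrix M).submatrix e e := by
  ext i j
  by_cases h : i = j
  · subst h
    simp [charmatrix_apply_eq]
  · simp [charmatrix_apply_ne _ _ _ h, charmatrix_apply_ne _ _ _ (he.ne h)]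

theorem charpoly_add_single_zero_zero {m : ℕ} (M : Matrix (Fin (m + 1)) (Fin (m + 1)) R)
    (c : R) :
    (M + single 0 0 c).charpoly =
      M.charpoly - C c * (M.submatrix Fin.succ Fin.succ).charpoly := by
  rw [charpoly, charmatrix_add, map_single _ _ _ C, sub_eq_add_neg, single_neg,
    det_add_single_zero_zero, neg_mul, ← sub_eq_add_neg, charpoly, charpoly,
    charmatrix_submatrix_s4 _ (Fin.succ_injective m)]

theorem charpoly_comp_neg_X (M : Matrix n n R) :
    M.charpoly.comp (-X) = (-1) ^ Fintype.card n * (-M).charpoly := by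
  have hmap : (charmatrix M).map (fun p => p.comp (-X)) = -charmatrix (-M) := by
    ext i j : 1
    by_cases h : i = j
    · subst h
      rw [map_apply, Matrix.neg_apply, charmatrix_apply_eq, charmatrix_apply_eq, sub_comp, X_comp,
        C_comp, Matrix.neg_apply, map_neg]
      ring
    · simp [charmatrix_apply_ne _ _ _ h]
  rw [charpoly, ← coe_compRingHom_apply, RingHom.map_det, RingHom.mapMatrix_apply,
    coe_compRingHom, hmap, det_neg, charpoly]

/-- The similarity `M ↦ D M D` with `D = diag ((-1)^i)` negates every entry with `i + j` odd. -/
theorem charpoly_neg_of_odd {k : ℕ} (M : Matrix (Fin k) (Fin k) R)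
    (hM : ∀ i j, M i j ≠ 0 → Odd ((i : ℕ) + j)) : (-M).charpoly = M.charpoly := by
  set D : Matrix (Fin k) (Fin k) R := diagonal fun i => (-1) ^ (i : ℕ)
  have hDD : D * D = 1 := by
    simp [D, diagonal_mul_diagonal, ← pow_add, ← two_mul, pow_mul]
  have hconj : D * M * D = -M := by
    ext i j
    by_cases hz : M i j = 0
    · simp [D, hz]
    · have hsign : ((-1 : R) ^ (i : ℕ)) * (-1) ^ (j : ℕ) = -1 := by
        rw [← pow_add, (hM i j hz).neg_one_pow]
      simp only [D, diagonal_mul, mul_diagonal, neg_apply]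
      linear_combination M i j * hsign
  rw [← hconj, charpoly_mul_comm, ← mul_assoc, hDD, one_mul]

theorem charpoly_comp_neg_X_of_odd {k : ℕ} (M : Matrix (Fin k) (Fin k) R)
    (hM : ∀ i j, M i j ≠ 0 → Odd ((i : ℕ) + j)) :
    M.charpoly.comp (-X) = (-1) ^ k * M.charpoly := by
  rw [charpoly_comp_neg_X, charpoly_neg_of_odd M hM, Fintype.card_fin]

end Matrix

theorem schwarzMatrix_eq_schwarzAux_add_single {m : ℕ} (b : Fin (m + 1) → ℝ) :
    schwarzMatrix b = schwarzAux b + Matrix.single 0 0 (-b 0) := by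
  ext i j
  rw [Matrix.add_apply, single_apply]
  by_cases h : i = 0 ∧ j = 0
  · obtain ⟨rfl, rfl⟩ := h
    simp [schwarzMatrix, schwarzAux]
  · have h' : ¬((i : ℕ) = 0 ∧ (j : ℕ) = 0) := fun ⟨hi, hj⟩ => h ⟨Fin.ext hi, Fin.ext hj⟩
    have h'' : ¬((0 : Fin (m + 1)) = i ∧ 0 = j) := fun ⟨hi, hj⟩ => h ⟨hi.symm, hj.symm⟩
    simp only [schwarzMatrix, schwarzAux, of_apply, if_neg h', if_neg h'', add_zero]

theorem charpoly_schwarzMatrix {n : ℕ} (hn : 0 < n) (b : Fin n → ℝ) :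
    (schwarzMatrix b).charpoly =
      (schwarzAux b).charpoly + C (b ⟨0, hn⟩) * (trailing (schwarzAux b)).charpoly := by
  obtain ⟨m, rfl⟩ : ∃ m, n = m + 1 := ⟨n - 1, by omega⟩
  rw [schwarzMatrix_eq_schwarzAux_add_single, charpoly_add_single_zero_zero, map_neg, neg_mul,
    sub_neg_eq_add]
  rfl

theorem odd_of_schwarzAux_apply_ne_zero {n : ℕ} (b : Fin n → ℝ) {i j : Fin n}
    (h : schwarzAux b i j ≠ 0) : Odd ((i : ℕ) + j) := by
  simp only [schwarzAux, of_apply] at h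
  split_ifs at h with h₁ h₂
  exacts [⟨i, by omega⟩, ⟨j, by omega⟩, absurd rfl h]

theorem odd_of_trailing_apply_ne_zero {n : ℕ} {M : Matrix (Fin n) (Fin n) ℝ}
    (hM : ∀ i j, M i j ≠ 0 → Odd ((i : ℕ) + j)) {i j : Fin (n - 1)}
    (h : trailing M i j ≠ 0) : Odd ((i : ℕ) + j) := by
  obtain ⟨k, hk⟩ := hM _ _ h
  exact ⟨k - 1, by simp only at hk; omega⟩

/-- for a Schwarz matrix of even size `n = 2l` with characteristic polynomial
`p(z) = p₀(z²) + z·p₁(z²)`, one has `p₀(z²) = det(zI - A_n)` and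
`z·p₁(z²) = b₀·det(zI - A_{n-1})`. -/
theorem schwarz_stmt4 {l : ℕ} (hl : 0 < l) (b : Fin (2 * l) → ℝ)
    (p0 p1 : Polynomial ℝ)
    (hp : (schwarzMatrix b).charpoly =
      p0.comp (Polynomial.X ^ 2) + Polynomial.X * p1.comp (Polynomial.X ^ 2)) :
    p0.comp (Polynomial.X ^ 2) = (schwarzAux b).charpoly ∧
    Polynomial.X * p1.comp (Polynomial.X ^ 2) =
      Polynomial.C (b ⟨0, by omega⟩) * (trailing (schwarzAux b)).charpoly := by
  have hAux : ∀ i j, schwarzAux b i j ≠ 0 → Odd ((i : ℕ) + j) :=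
    fun _ _ => odd_of_schwarzAux_apply_ne_zero b
  have hA_even : (schwarzAux b).charpoly.comp (-X) = (schwarzAux b).charpoly := by
    rw [charpoly_comp_neg_X_of_odd _ hAux, Even.neg_one_pow ⟨l, two_mul l⟩, one_mul]
  have hT_odd : (C (b ⟨0, by omega⟩) * (trailing (schwarzAux b)).charpoly).comp (-X) =
      -(C (b ⟨0, by omega⟩) * (trailing (schwarzAux b)).charpoly) := by
    rw [mul_comp, C_comp,
      charpoly_comp_neg_X_of_odd _ (fun _ _ => odd_of_trailing_apply_ne_zero hAux),
      Odd.neg_one_pow ⟨l - 1, by omega⟩, neg_one_mul, mul_neg]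
  exact eq_and_eq_of_add_eq_add_of_comp_neg_X (comp_X_sq_comp_neg_X p0) hA_even
    (X_mul_comp_X_sq_comp_neg_X p1) hT_odd (hp.symm.trans (charpoly_schwarzMatrix (by omega) b))
end

section
/- If all entries b_0, b_1, ..., b_{n-1} of the Schwarz matrix J_n are positive, then every eigenvalue of J_n has negative real part. -/
open Polynomial Matrix

/-!
Lyapunov's argument. With the positive weights `w i = b (i+1) ⋯ b (n-1)` and `D = diag w`,
the tridiagonal sign pattern of `J` gives `D J + Jᵀ D = -diag(2 b₀ w₀, 0, …, 0)`. For an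
eigenvector `J v = z v` this yields `2 Re z · ∑ wᵢ |vᵢ|² = -2 b₀ w₀ |v₀|²`, and `v₀ ≠ 0`
because the superdiagonal of ones recovers `v (i+1)` from row `i` of `J v = z v`.
-/

open ComplexOrder

theorem exists_mulVec_eq_smul_of_mem_cRoots_charpoly {ι : Type*} [Fintype ι] [DecidableEq ι]
    {M : Matrix ι ι ℝ} {z : ℂ} (hz : z ∈ cRoots M.charpoly) :
    ∃ v ≠ 0, M.map (algebraMap ℝ ℂ) *ᵥ v = z • v := by
  have hroot : (M.map (algebraMap ℝ ℂ)).charpoly.IsRoot z := by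
    rw [charpoly_map]; exact isRoot_of_mem_roots hz
  rw [← mem_spectrum_iff_isRoot_charpoly, ← spectrum_toLin',
    ← Module.End.hasEigenvalue_iff_mem_spectrum] at hroot
  obtain ⟨v, hv⟩ := hroot.exists_hasEigenvector
  exact ⟨v, hv.2, by simpa using Module.End.mem_eigenspace_iff.mp hv.1⟩

theorem Matrix.eigenvalue_re_neg_of_lyapunov {ι : Type*} [Fintype ι] {A P Q : Matrix ι ι ℂ}
    {v : ι → ℂ} {z : ℂ} (hP : P.PosDef) (hPAQ : P * A + Aᴴ * P = -Q) (hv : A *ᵥ v = z • v)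
    (hQ : 0 < star v ⬝ᵥ (Q *ᵥ v)) : z.re < 0 := by
  have hv0 : v ≠ 0 := by rintro rfl; simp at hQ
  have hPv := hP.dotProduct_mulVec_pos hv0
  have key : star v ⬝ᵥ ((P * A + Aᴴ * P) *ᵥ v) = (z + star z) * (star v ⬝ᵥ (P *ᵥ v)) := by
    rw [add_mulVec, dotProduct_add, ← mulVec_mulVec, ← mulVec_mulVec, hv, mulVec_smul,
      dotProduct_smul, dotProduct_mulVec (star v) Aᴴ, ← star_mulVec, hv, star_smul,
      smul_dotProduct]
    simp only [smul_eq_mul]; ring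
  rw [hPAQ, neg_mulVec, dotProduct_neg, Complex.star_def, Complex.add_conj] at key
  rw [Complex.pos_iff] at hQ hPv
  have hre := congrArg Complex.re key
  simp only [Complex.neg_re, Complex.mul_re, Complex.ofReal_re, Complex.ofReal_im] at hre
  nlinarith

section Schwarz

variable {n : ℕ} (b : Fin n → ℝ)

theorem schwarzMatrix_zero_zero [NeZero n] : schwarzMatrix b 0 0 = -b 0 := by
  simp [schwarzMatrix]

theorem schwarzMatrix_apply_of_succ_eq {i j : Fin n} (h : (i : ℕ) + 1 = j) :
    schwarzMatrix b i j = 1 := by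
  rw [schwarzMatrix, of_apply, if_neg (by omega), if_pos h]

theorem schwarzMatrix_apply_of_eq_succ {i j : Fin n} (h : (i : ℕ) = j + 1) :
    schwarzMatrix b i j = -b i := by
  rw [schwarzMatrix, of_apply, if_neg (by omega), if_neg (by omega), if_pos h]

theorem schwarzMatrix_apply_eq_zero {i j : Fin n} (h₀ : ¬((i : ℕ) = 0 ∧ (j : ℕ) = 0))
    (h₁ : (i : ℕ) + 1 ≠ j) (h₂ : (i : ℕ) ≠ j + 1) : schwarzMatrix b i j = 0 := by
  rw [schwarzMatrix, of_apply, if_neg h₀, if_neg h₁, if_neg h₂]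

def schwarzWeight (i : Fin n) : ℝ := ∏ k ∈ Finset.Ioi i, b k

variable {b}

theorem schwarzWeight_pos (hb : ∀ i, 0 < b i) (i : Fin n) : 0 < schwarzWeight b i :=
  Finset.prod_pos fun k _ => hb k

theorem schwarzWeight_of_succ_eq {i j : Fin n} (h : (i : ℕ) + 1 = j) :
    schwarzWeight b i = b j * schwarzWeight b j := by
  have hIoi : Finset.Ioi i = insert j (Finset.Ioi j) := by
    ext k; simp only [Finset.mem_Ioi, Finset.mem_insert, Fin.lt_def, Fin.ext_iff]; omega
  rw [schwarzWeight, hIoi, Finset.prod_insert (by simp)]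
  rfl

variable (b)

theorem schwarzMatrix_lyapunov [NeZero n] :
    diagonal (schwarzWeight b) * schwarzMatrix b + (schwarzMatrix b)ᵀ * diagonal (schwarzWeight b)
      = -diagonal (Pi.single 0 (2 * b 0 * schwarzWeight b 0)) := by
  ext i j
  simp only [Matrix.add_apply, diagonal_mul, mul_diagonal, transpose_apply, Matrix.neg_apply,
    diagonal_apply]
  rcases eq_or_ne i j with rfl | hij
  · rw [if_pos rfl]
    rcases eq_or_ne i 0 with rfl | hi
    · rw [schwarzMatrix_zero_zero, Pi.single_eq_same]; ring
    · have hi' : (i : ℕ) ≠ 0 := Fin.val_ne_zero_iff.mpr hi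
      rw [schwarzMatrix_apply_eq_zero b (by omega) (by omega) (by omega),
        Pi.single_eq_of_ne hi]
      ring
  rw [if_neg hij, neg_zero]
  have hij' : (i : ℕ) ≠ j := Fin.val_ne_iff.mpr hij
  by_cases hs : (i : ℕ) + 1 = j
  · rw [schwarzMatrix_apply_of_succ_eq b hs, schwarzMatrix_apply_of_eq_succ b hs.symm,
      schwarzWeight_of_succ_eq hs]
    ring
  by_cases hs' : (i : ℕ) = j + 1
  · rw [schwarzMatrix_apply_of_eq_succ b hs', schwarzMatrix_apply_of_succ_eq b hs'.symm,
      schwarzWeight_of_succ_eq hs'.symm]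
    ring
  rw [schwarzMatrix_apply_eq_zero b (by omega) hs hs',
    schwarzMatrix_apply_eq_zero b (by omega) (by omega) (by omega)]
  ring

theorem schwarzMatrix_eigenvector_apply_zero_ne_zero [NeZero n] {v : Fin n → ℂ} {z : ℂ}
    (hv : (schwarzMatrix b).map (algebraMap ℝ ℂ) *ᵥ v = z • v) (hv0 : v ≠ 0) : v 0 ≠ 0 := by
  intro h0
  suffices h : ∀ m, ∀ i : Fin n, (i : ℕ) ≤ m → v i = 0 from
    hv0 (funext fun i => h i i le_rfl)
  intro m
  induction m with
  | zero => intro i hi; rwa [show i = 0 from Fin.val_eq_zero_iff.mp (by omega)]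
  | succ m ih =>
    intro i hi
    rcases Nat.lt_or_ge (i : ℕ) (m + 1) with hlt | hge
    · exact ih i (by omega)
    have hsucc : (i : ℕ) = m + 1 := by omega
    obtain ⟨j, hj⟩ : ∃ j : Fin n, (j : ℕ) = m := ⟨⟨m, by omega⟩, rfl⟩
    -- row `m` of `J v = z v`, with `v` vanishing up to index `m`, reads `v (m + 1) = 0`
    have hrow := congrFun hv j
    rw [Pi.smul_apply, ih j hj.le, smul_zero, mulVec, dotProduct,
      Finset.sum_eq_single i] at hrow
    · simpa [schwarzMatrix_apply_of_succ_eq b (i := j) (j := i) (by omega)] using hrow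
    · intro k _ hki
      rcases Nat.lt_or_ge (k : ℕ) (m + 1) with hk | hk
      · rw [ih k (by omega), mul_zero]
      · have hk' : (k : ℕ) ≠ m + 1 := fun h => hki (Fin.ext (by omega))
        rw [map_apply, schwarzMatrix_apply_eq_zero b (by omega) (by omega) (by omega),
          map_zero, zero_mul]
    · simp

end Schwarz

/-- if all parameters of the Schwarz matrix are positive, then every
eigenvalue has negative real part. -/
theorem schwarz_stmt5 {n : ℕ} (b : Fin n → ℝ) (hb : ∀ i, 0 < b i) :
    ∀ z ∈ cRoots (schwarzMatrix b).charpoly, z.re < 0 := by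
  intro z hz
  obtain ⟨v, hv0, hv⟩ := exists_mulVec_eq_smul_of_mem_cRoots_charpoly hz
  have : NeZero n := ⟨by rintro rfl; exact hv0 (Subsingleton.elim _ _)⟩
  have hlyap := congrArg (algebraMap ℝ ℂ).mapMatrix (schwarzMatrix_lyapunov b)
  simp only [map_add, map_mul, map_neg, RingHom.mapMatrix_apply, diagonal_map (map_zero _),
    ← conjTranspose_eq_transpose_of_trivial] at hlyap
  rw [conjTranspose_map _ (fun x => by simp)] at hlyap
  refine eigenvalue_re_neg_of_lyapunov
    (posDef_diagonal_iff.mpr fun i => by simpa using schwarzWeight_pos hb i) hlyap hv ?_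
  have hQv : star v ⬝ᵥ ((diagonal fun m => algebraMap ℝ ℂ
      ((Pi.single 0 (2 * b 0 * schwarzWeight b 0) : Fin n → ℝ) m)) *ᵥ v) =
      ((2 * b 0 * schwarzWeight b 0 * Complex.normSq (v 0) : ℝ) : ℂ) := by
    simp [dotProduct, mulVec_diagonal, Pi.single_apply, apply_ite, ite_mul,
      Complex.normSq_eq_conj_mul_self]
    ring
  have hv₀ := Complex.normSq_pos.mpr (schwarzMatrix_eigenvector_apply_zero_ne_zero b hv hv0)
  rw [hQv, Complex.zero_lt_real]
  exact mul_pos (mul_pos (mul_pos two_pos (hb 0)) (schwarzWeight_pos hb 0)) hv₀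
end

section
/- A real monic polynomial p(z) = p_0(z²) + z·p_1(z²) of degree n is self-interlacing of type I (its roots λ_1, ..., λ_n are real and simple with 0 < λ_1 < -λ_2 < λ_3 < ⋯ < (-1)^{n-1}λ_n) if and only if the polynomial q(z) = p_0(-z²) - z·p_1(-z²) has all its roots in the open left half-plane. -/
/-!
Over `ℂ`, `2 q(z) = (1 + i) p(iz) + (1 - i) p(-iz)` and `2 p(z) = (1 + i) q(iz) + (1 - i) q(-iz)`.

If `p = ∏ (X - λₖ)` is self-interlacing and `q(z) = 0`, then `w = iz` satisfies `p(-w) = -i p(w)`.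
In the partial fraction expansion `p(-w) / p(w) - (-1)ⁿ = ∑ cₖ / (w - λₖ)` the interlacing makes
every residue `cₖ` negative, so the right side has nonnegative imaginary part when
`Im w = Re z ≥ 0`, whereas `-i - (-1)ⁿ` has imaginary part `-1`.

Conversely, if every root `ρ` of `q` has `Re ρ < 0`, then `q(ix) = r(x) exp(i θ(x))` with `r`
real and `θ(x) = ∑ arctan ((x - Im ρ) / -Re ρ)`. The phase `θ` is continuous, strictly
increasing, odd (the roots are closed under conjugation) and tends to `n π / 2`. On the real line
`p(x) = Re q(ix) - Im q(ix)` vanishes where `cos θ = sin θ`: at the points `xₖ > 0` with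
`θ(xₖ) = (2k + 1) π / 4` for even `k`, and at `-xₖ` for odd `k`. These are the `n` roots
`λₖ = (-1)ᵏ xₖ`, in the self-interlacing order.
-/

open Polynomial Complex Lagrange Finset Filter Topology
open scoped Real

lemma Polynomial.degree_comp_neg_X_sub_lt {F : Type*} [Field F] {P : F[X]} (hP : P.Monic) :
    (P.comp (-X) - C ((-1) ^ P.natDegree) * P).degree < (P.natDegree : WithBot ℕ) := by
  nontriviality F
  have hc : ((-1 : F) ^ P.natDegree) ≠ 0 := pow_ne_zero _ (neg_ne_zero.mpr one_ne_zero)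
  calc (P.comp (-X) - C ((-1) ^ P.natDegree) * P).degree < (P.comp (-X)).degree := by
        refine degree_sub_lt_left ?_ (by simpa using hP.ne_zero) ?_
        · rw [degree_comp_neg_X, degree_C_mul hc]
        · rw [comp_neg_X_leadingCoeff_eq, leadingCoeff_C_mul_of_isUnit hc.isUnit]
    _ = P.natDegree := by rw [degree_comp_neg_X, degree_eq_natDegree hP.ne_zero]

lemma Polynomial.eq_prod_X_sub_C_of_injective {F : Type*} [Field F] {n : ℕ} {p : F[X]}
    (hm : p.Monic) (hdeg : p.natDegree = n) {v : Fin n → F} (hv : Function.Injective v)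
    (hroot : ∀ i, p.eval (v i) = 0) : p = ∏ i, (X - C (v i)) := by
  have hdvd : ∏ i, (X - C (v i)) ∣ p :=
    Fintype.prod_dvd_of_coprime (pairwise_coprime_X_sub_C hv) fun i => dvd_iff_isRoot.mpr (hroot i)
  rw [← nodal_eq] at hdvd ⊢
  exact eq_of_monic_of_dvd_of_natDegree_le nodal_monic hm hdvd
    (by rw [natDegree_nodal, hdeg, card_univ, Fintype.card_fin])

namespace Lagrange

lemma nodalWeight_ofReal {ι : Type*} [DecidableEq ι] (s : Finset ι) (v : ι → ℝ) (i : ι) :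
    nodalWeight s (fun j => (v j : ℂ)) i = nodalWeight s v i := by
  simp [nodalWeight]

lemma eval_nodal_ofReal {ι : Type*} (s : Finset ι) (v : ι → ℝ) (x : ℝ) :
    (nodal s (fun j => (v j : ℂ))).eval (x : ℂ) = (nodal s v).eval x := by
  simp [eval_nodal]

variable {F ι : Type*} [Field F] [DecidableEq ι] {s : Finset ι} {v : ι → F} {x : F}

lemma eval_neg_sub_eq_mul_sum (hvs : Set.InjOn v s) (hx : ∀ i ∈ s, x ≠ v i) :
    (nodal s v).eval (-x) - (-1) ^ #s * (nodal s v).eval x =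
      (nodal s v).eval x * ∑ i ∈ s, nodalWeight s v i * (x - v i)⁻¹ * (nodal s v).eval (-v i) := by
  set r := (nodal s v).comp (-X) - C ((-1) ^ #s) * nodal s v
  have hr : r.degree < #s := by
    simpa only [natDegree_nodal] using degree_comp_neg_X_sub_lt (nodal_monic (s := s) (v := v))
  have hnode : ∀ i ∈ s, r.eval (v i) = (nodal s v).eval (-v i) := fun i hi => by
    simp [r, eval_comp, eval_nodal_at_node hi]
  calc _ = r.eval x := by simp [r, eval_comp]
    _ = (interpolate s v fun i => r.eval (v i)).eval x := by rw [← eq_interpolate hvs hr]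
    _ = _ := by
      rw [eval_interpolate_not_at_node _ hx]
      exact congrArg _ (sum_congr rfl fun i hi => by rw [hnode i hi])

end Lagrange

lemma Complex.im_sum_ofReal_mul_inv_sub_nonneg {ι : Type*} (s : Finset ι) {c μ : ι → ℝ}
    (hc : ∀ i ∈ s, c i ≤ 0) {w : ℂ} (hw : 0 ≤ w.im) :
    0 ≤ (∑ i ∈ s, (c i : ℂ) * (w - μ i)⁻¹).im := by
  rw [im_sum]
  refine sum_nonneg fun i hi => ?_
  rw [im_ofReal_mul, inv_im, sub_im, ofReal_im, sub_zero]
  exact mul_nonneg_of_nonpos_of_nonpos (hc i hi)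
    (div_nonpos_of_nonpos_of_nonneg (neg_nonpos.mpr hw) (normSq_nonneg _))

lemma neg_sub_mul_inv_sub_eq {a b : ℝ} (hab : a ≠ b) :
    (-a - b) * (a - b)⁻¹ = (b ^ 2 - a ^ 2) / (a - b) ^ 2 := by
  have : a - b ≠ 0 := sub_ne_zero.mpr hab
  field_simp
  ring

lemma Complex.arg_eq_arctan {z : ℂ} (hz : 0 < z.re) : arg z = Real.arctan (z.im / z.re) := by
  have := abs_lt.mp (abs_arg_lt_pi_div_two_iff.mpr (Or.inl hz))
  rw [← tan_arg, Real.arctan_tan this.1 this.2]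

lemma Multiset.exists_prod_eq_ofReal_mul_exp (s : Multiset ℂ) (hs : ∀ z ∈ s, 0 < z.re) :
    ∃ r : ℝ, s.prod = r * exp ((s.map fun z => Real.arctan (z.im / z.re)).sum * I) := by
  induction s using Multiset.induction_on with
  | empty => exact ⟨1, by simp⟩
  | cons z s ih =>
    obtain ⟨r, hr⟩ := ih fun w hw => hs w (mem_cons_of_mem hw)
    refine ⟨‖z‖ * r, ?_⟩
    rw [prod_cons, map_cons, sum_cons, hr, ← arg_eq_arctan (hs z (mem_cons_self z s))]
    conv_lhs => rw [← norm_mul_exp_arg_mul_I z]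
    push_cast
    rw [add_mul, Complex.exp_add]
    ring

lemma Real.cos_odd_mul_pi_div_four (k : ℕ) :
    cos ((2 * k + 1) * π / 4) = (-1) ^ k * sin ((2 * k + 1) * π / 4) := by
  induction k with
  | zero => simp [cos_pi_div_four, sin_pi_div_four]
  | succ k ih =>
    have hsq : ((-1 : ℝ) ^ k) * (-1) ^ k = 1 := by rw [← mul_pow]; norm_num
    rw [show (2 * ((k + 1 : ℕ) : ℝ) + 1) * π / 4 = (2 * k + 1) * π / 4 + π / 2 by push_cast; ring,
      cos_add_pi_div_two, sin_add_pi_div_two, pow_succ]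
    linear_combination (-1) ^ k * ih + sin ((2 * k + 1) * π / 4) * hsq

lemma Real.cos_eq_sin_neg_one_pow_mul (k : ℕ) :
    cos ((-1) ^ k * ((2 * k + 1) * π / 4)) = sin ((-1) ^ k * ((2 * k + 1) * π / 4)) := by
  have := cos_odd_mul_pi_div_four k
  rcases neg_one_pow_eq_or ℝ k with h | h <;> simp_all

lemma exists_pos_eq_of_tendsto_atTop {f : ℝ → ℝ} (hf : Continuous f) {y L : ℝ} (h0 : f 0 < y)
    (hL : Tendsto f atTop (𝓝 L)) (hy : y < L) : ∃ x, 0 < x ∧ f x = y := by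
  obtain ⟨M, hM, hM0⟩ :=
    ((hL.eventually (eventually_gt_nhds hy)).and (eventually_ge_atTop 0)).exists
  obtain ⟨x, hx, rfl⟩ := intermediate_value_Ioo hM0 hf.continuousOn ⟨h0, hM⟩
  exact ⟨x, hx.1, rfl⟩

namespace Polynomial

variable (p0 p1 : ℝ[X])

lemma aeval_comp_sq_add_X_mul (z : ℂ) :
    aeval z (p0.comp (X ^ 2) + X * p1.comp (X ^ 2)) = aeval (z ^ 2) p0 + z * aeval (z ^ 2) p1 := by
  simp [aeval_comp]

lemma aeval_comp_neg_sq_sub_X_mul (z : ℂ) :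
    aeval z (p0.comp (-X ^ 2) - X * p1.comp (-X ^ 2)) =
      aeval (-z ^ 2) p0 - z * aeval (-z ^ 2) p1 := by
  simp [aeval_comp]

lemma aeval_comp_neg_sq_sub_X_mul_eq_rotations (z : ℂ) :
    aeval z (p0.comp (-X ^ 2) - X * p1.comp (-X ^ 2)) =
      (1 + I) / 2 * aeval (I * z) (p0.comp (X ^ 2) + X * p1.comp (X ^ 2)) +
        (1 - I) / 2 * aeval (-(I * z)) (p0.comp (X ^ 2) + X * p1.comp (X ^ 2)) := by
  simp only [aeval_comp_sq_add_X_mul, aeval_comp_neg_sq_sub_X_mul, neg_sq, mul_pow, I_sq,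
    neg_one_mul]
  linear_combination -(z * aeval (-z ^ 2) p1) * I_sq

lemma aeval_comp_sq_add_X_mul_eq_rotations (z : ℂ) :
    aeval z (p0.comp (X ^ 2) + X * p1.comp (X ^ 2)) =
      (1 + I) / 2 * aeval (I * z) (p0.comp (-X ^ 2) - X * p1.comp (-X ^ 2)) +
        (1 - I) / 2 * aeval (-(I * z)) (p0.comp (-X ^ 2) - X * p1.comp (-X ^ 2)) := by
  simp only [aeval_comp_sq_add_X_mul, aeval_comp_neg_sq_sub_X_mul, neg_sq, mul_pow, I_sq,
    neg_one_mul, neg_neg]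
  linear_combination z * aeval (z ^ 2) p1 * I_sq

lemma eval_comp_sq_add_X_mul_eq_re_sub_im (x : ℝ) :
    (p0.comp (X ^ 2) + X * p1.comp (X ^ 2)).eval x =
      (aeval (I * x) (p0.comp (-X ^ 2) - X * p1.comp (-X ^ 2))).re -
        (aeval (I * x) (p0.comp (-X ^ 2) - X * p1.comp (-X ^ 2))).im := by
  have h := congrArg re (aeval_comp_sq_add_X_mul_eq_rotations p0 p1 x)
  have hx : aeval (x : ℂ) (p0.comp (X ^ 2) + X * p1.comp (X ^ 2)) =
      (((p0.comp (X ^ 2) + X * p1.comp (X ^ 2)).eval x : ℝ) : ℂ) := aeval_ofReal _ _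
  have hre (u : ℂ) : ((1 + I) / 2 * u + (1 - I) / 2 * (starRingEnd ℂ) u).re = u.re - u.im := by
    simp only [add_re, mul_re, div_ofNat_re, div_ofNat_im, one_re, one_im, I_re, I_im, add_im,
      sub_re, sub_im, conj_re, conj_im]
    ring
  rwa [show -(I * x) = (starRingEnd ℂ) (I * x) by simp, aeval_conj, hx, ofReal_re, hre] at h

lemma natDegree_comp_sq_add_X_mul_le :
    (p0.comp (X ^ 2) + X * p1.comp (X ^ 2)).natDegree ≤
      (p0.comp (-X ^ 2) - X * p1.comp (-X ^ 2)).natDegree := by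
  set Q := (p0.comp (-X ^ 2) - X * p1.comp (-X ^ 2)).map (algebraMap ℝ ℂ)
  have hid : (p0.comp (X ^ 2) + X * p1.comp (X ^ 2)).map (algebraMap ℝ ℂ) =
      C ((1 + I) / 2) * Q.comp (C I * X) + C ((1 - I) / 2) * Q.comp (C (-I) * X) :=
    Polynomial.funext fun z => by
      simp only [Q, eval_map_algebraMap, aeval_comp_sq_add_X_mul_eq_rotations, eval_add, eval_mul,
        eval_C, eval_comp, eval_X, neg_mul]
  have hcomp : ∀ c : ℂ, c ≠ 0 → (Q.comp (C c * X)).natDegree = Q.natDegree := fun c hc => by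
    simp [natDegree_comp, hc]
  rw [← natDegree_map (f := algebraMap ℝ ℂ), ← natDegree_map (f := algebraMap ℝ ℂ), hid]
  refine natDegree_add_le_of_degree_le ?_ ?_ <;>
    refine (natDegree_C_mul_le _ _).trans (le_of_eq ?_)
  · exact hcomp I I_ne_zero
  · exact hcomp (-I) (neg_ne_zero.mpr I_ne_zero)

end Polynomial

/-- `λ` is self-interlacing of type I: `0 < λ 0 < -λ 1 < λ 2 < ⋯`, indices starting at `0`. -/
structure IsSelfInterlacing {n : ℕ} (lam : Fin n → ℝ) : Prop where
  strictMono : StrictMono fun i : Fin n => (-1 : ℝ) ^ (i : ℕ) * lam i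
  pos : ∀ i : Fin n, 0 < (-1 : ℝ) ^ (i : ℕ) * lam i

namespace IsSelfInterlacing

variable {n : ℕ} {lam : Fin n → ℝ}

lemma of_strictMono {x : Fin n → ℝ} (hx : StrictMono x) (hpos : ∀ i, 0 < x i) :
    IsSelfInterlacing fun i => (-1) ^ (i : ℕ) * x i := by
  have hsq : ∀ i : Fin n, (-1 : ℝ) ^ (i : ℕ) * ((-1) ^ (i : ℕ) * x i) = x i := fun i => by
    rw [← mul_assoc, ← mul_pow]
    norm_num
  exact ⟨by simpa only [hsq] using hx, by simpa only [hsq] using hpos⟩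

lemma abs_eq (h : IsSelfInterlacing lam) (i : Fin n) : |lam i| = (-1) ^ (i : ℕ) * lam i := by
  rw [← abs_of_pos (h.pos i), abs_mul, abs_pow, abs_neg, abs_one, one_pow, one_mul]

lemma abs_strictMono (h : IsSelfInterlacing lam) : StrictMono fun i => |lam i| := by
  simpa only [h.abs_eq] using h.strictMono

lemma injective (h : IsSelfInterlacing lam) : Function.Injective lam :=
  fun _ _ hij => h.abs_strictMono.injective (congrArg abs hij)

lemma ne_neg (h : IsSelfInterlacing lam) (i j : Fin n) : lam i ≠ -lam j := by
  intro hij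
  obtain rfl : i = j := h.abs_strictMono.injective (by simp only [hij, abs_neg])
  have hzero : lam i = 0 := by linarith
  simpa [hzero] using h.pos i

/-- The residue `p(-λₖ) / p'(λₖ)` of `p(-x) / p(x)` at `λₖ` has sign `-sign(λₖ) (-1)ᵏ = -1`. -/
lemma nodalWeight_mul_eval_neg_neg (h : IsSelfInterlacing lam) (k : Fin n) :
    nodalWeight univ lam k * (nodal univ lam).eval (-lam k) < 0 := by
  set t : Fin n → ℝ := fun j => (-lam k - lam j) * (lam k - lam j)⁻¹
  have hsq : ∀ j ≠ k, 0 < (lam k - lam j) ^ 2 := fun j hj =>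
    sq_pos_of_ne_zero (sub_ne_zero.mpr (h.injective.ne hj.symm))
  have hlt : ∀ j ∈ Iio k, 0 < -t j := fun j hj => by
    have hjk := mem_Iio.mp hj
    show 0 < -((-lam k - lam j) * (lam k - lam j)⁻¹)
    rw [neg_pos, neg_sub_mul_inv_sub_eq (h.injective.ne hjk.ne')]
    exact div_neg_of_neg_of_pos (by linarith [sq_lt_sq.mpr (h.abs_strictMono hjk)])
      (hsq j hjk.ne)
  have hgt : ∀ j ∈ Ioi k, 0 < t j := fun j hj => by
    have hjk := mem_Ioi.mp hj
    show 0 < (-lam k - lam j) * (lam k - lam j)⁻¹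
    rw [neg_sub_mul_inv_sub_eq (h.injective.ne hjk.ne)]
    exact div_pos (by linarith [sq_lt_sq.mpr (h.abs_strictMono hjk)]) (hsq j hjk.ne')
  have hsplit : univ.erase k = Iio k ∪ Ioi k := by
    ext j
    simp only [mem_erase, mem_univ, and_true, mem_union, mem_Iio, mem_Ioi]
    exact ne_iff_lt_or_gt
  have hsign : ((-1 : ℝ) ^ (k : ℕ)) * (-1) ^ (k : ℕ) = 1 := by rw [← mul_pow]; norm_num
  calc nodalWeight univ lam k * (nodal univ lam).eval (-lam k)
      = (-lam k - lam k) * ∏ j ∈ univ.erase k, t j := by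
        rw [nodalWeight, eval_nodal, ← mul_prod_erase univ _ (mem_univ k), prod_mul_distrib]
        ring
    _ = -2 * ((-1) ^ (k : ℕ) * lam k) * (∏ j ∈ Iio k, -t j) * ∏ j ∈ Ioi k, t j := by
        rw [hsplit, prod_union (disjoint_left.mpr fun j h1 h2 =>
          (mem_Iio.mp h1).not_gt (mem_Ioi.mp h2)), prod_neg, Fin.card_Iio]
        linear_combination (2 * lam k * (∏ j ∈ Iio k, t j) * ∏ j ∈ Ioi k, t j) * hsign
    _ < 0 := by
        have := mul_pos (mul_pos (h.pos k) (prod_pos hlt)) (prod_pos hgt)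
        linarith

lemma prod_neg_sub_ne (h : IsSelfInterlacing lam) {w : ℂ} (hw : 0 ≤ w.im) :
    ∏ i, (-w - lam i) ≠ -I * ∏ i, (w - lam i) := by
  intro heq
  by_cases hP : ∏ i, (w - lam i) = 0
  · obtain ⟨i, -, hi⟩ := prod_eq_zero_iff.mp hP
    rw [hP, mul_zero] at heq
    obtain ⟨j, -, hj⟩ := prod_eq_zero_iff.mp heq
    exact h.ne_neg j i (by exact_mod_cast (by linear_combination -hj - hi : (lam j : ℂ) = -lam i))
  have hx : ∀ i ∈ univ, w ≠ lam i := fun i _ hwi =>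
    hP (prod_eq_zero (mem_univ i) (sub_eq_zero.mpr hwi))
  obtain ⟨c, hc, hres⟩ : ∃ c : Fin n → ℝ, (∀ i, c i < 0) ∧
      ∀ i, nodalWeight univ (fun j => (lam j : ℂ)) i * (w - lam i)⁻¹ *
        (nodal univ (fun j => (lam j : ℂ))).eval (-(lam i : ℂ)) = c i * (w - lam i)⁻¹ := by
    refine ⟨_, h.nodalWeight_mul_eval_neg_neg, fun i => ?_⟩
    rw [ofReal_mul, ← nodalWeight_ofReal, ← eval_nodal_ofReal, ofReal_neg]
    ring
  have hpf := eval_neg_sub_eq_mul_sum (v := fun j => (lam j : ℂ))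
    (ofReal_injective.comp h.injective).injOn hx
  rw [sum_congr rfl fun i _ => hres i] at hpf
  simp only [eval_nodal, card_univ, Fintype.card_fin, heq] at hpf
  have hsum : -I - (-1) ^ n = ∑ i, (c i : ℂ) * (w - lam i)⁻¹ :=
    mul_left_cancel₀ hP (by linear_combination hpf)
  have him : (-I - (-1 : ℂ) ^ n).im = -1 := by
    rcases neg_one_pow_eq_or ℂ n with h1 | h1 <;> simp [h1]
  have := im_sum_ofReal_mul_inv_sub_nonneg univ (μ := lam) (fun i _ => (hc i).le) hw
  rw [← hsum, him] at this
  linarith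

theorem re_neg_of_mem_aroots (h : IsSelfInterlacing lam) {p0 p1 : ℝ[X]}
    (hp : p0.comp (X ^ 2) + X * p1.comp (X ^ 2) = ∏ i, (X - C (lam i))) {z : ℂ}
    (hz : z ∈ (p0.comp (-X ^ 2) - X * p1.comp (-X ^ 2)).aroots ℂ) : z.re < 0 := by
  have hq := (mem_aroots'.mp hz).2
  have hprod : ∀ x : ℂ, aeval x (∏ i, (X - C (lam i))) = ∏ i, (x - lam i) := fun x => by
    simp [map_prod]
  rw [aeval_comp_neg_sq_sub_X_mul_eq_rotations, hp, hprod, hprod] at hq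
  have hrot : ∏ i, (-(I * z) - lam i) = -I * ∏ i, (I * z - lam i) := by
    linear_combination (1 + I) * hq +
      (∏ i, (-(I * z) - lam i) - ∏ i, (I * z - lam i)) / 2 * I_sq
  by_contra hre
  exact h.prod_neg_sub_ne (w := I * z) (by simpa using not_lt.mp hre) hrot

end IsSelfInterlacing

namespace Polynomial

/-- A continuous branch of `arg q(ix)` when all roots of `q` lie in the open left half-plane. -/
noncomputable def phase (q : ℝ[X]) (x : ℝ) : ℝ :=
  ((q.aroots ℂ).map fun ρ => Real.arctan ((x - ρ.im) / -ρ.re)).sum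

variable {q : ℝ[X]}

lemma exists_aeval_I_mul_eq (hq : ∀ ρ ∈ q.aroots ℂ, ρ.re < 0) (x : ℝ) :
    ∃ r : ℝ, aeval (I * x) q = r * exp (phase q x * I) := by
  obtain ⟨r, hr⟩ := ((q.aroots ℂ).map (I * x - ·)).exists_prod_eq_ofReal_mul_exp fun z hz => by
    obtain ⟨ρ, hρ, rfl⟩ := Multiset.mem_map.mp hz
    simpa using hq ρ hρ
  refine ⟨q.leadingCoeff * r, ?_⟩
  rw [(IsAlgClosed.splits _).aeval_eq_prod_aroots, hr, Multiset.map_map]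
  simp [phase, mul_assoc]

lemma map_conj_aroots (q : ℝ[X]) : (q.aroots ℂ).map (starRingEnd ℂ) = q.aroots ℂ := by
  have hmap : (q.map (algebraMap ℝ ℂ)).map (starRingEnd ℂ) = q.map (algebraMap ℝ ℂ) := by
    rw [map_map]
    congr 1
    exact RingHom.ext conj_ofReal
  rw [aroots_def, ← (IsAlgClosed.splits _).roots_map, hmap]

lemma phase_neg (q : ℝ[X]) (x : ℝ) : phase q (-x) = -phase q x := by
  conv_rhs => rw [phase, ← map_conj_aroots, Multiset.map_map, ← Multiset.sum_map_neg]
  simp only [phase, Function.comp_apply, conj_re, conj_im]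
  refine congrArg _ (Multiset.map_congr rfl fun ρ _ => ?_)
  rw [← Real.arctan_neg]
  ring_nf

lemma phase_neg_one_pow_mul (q : ℝ[X]) (k : ℕ) (x : ℝ) :
    phase q ((-1) ^ k * x) = (-1) ^ k * phase q x := by
  rcases neg_one_pow_eq_or ℝ k with h | h <;> simp [h, phase_neg]

lemma phase_zero (q : ℝ[X]) : phase q 0 = 0 := by
  linarith [neg_zero (G := ℝ) ▸ phase_neg q 0]

lemma continuous_phase (q : ℝ[X]) : Continuous (phase q) :=
  continuous_multiset_sum _ fun _ _ => by fun_prop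

lemma phase_strictMono (hq : ∀ ρ ∈ q.aroots ℂ, ρ.re < 0) (hne : q.aroots ℂ ≠ 0) :
    StrictMono (phase q) := fun _ _ hxy =>
  Multiset.sum_lt_sum_of_nonempty hne fun ρ hρ => Real.arctan_strictMono
    (div_lt_div_of_pos_right (by linarith) (neg_pos.mpr (hq ρ hρ)))

lemma tendsto_phase_atTop (hq : ∀ ρ ∈ q.aroots ℂ, ρ.re < 0) :
    Tendsto (phase q) atTop (𝓝 (Multiset.card (q.aroots ℂ) * (π / 2))) := by
  have := tendsto_multiset_sum (q.aroots ℂ) (x := atTop)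
    (f := fun (ρ : ℂ) (x : ℝ) => Real.arctan ((x - ρ.im) / -ρ.re)) fun ρ hρ => by
      refine (Real.tendsto_arctan_atTop.mono_right nhdsWithin_le_nhds).comp ?_
      simpa only [sub_eq_add_neg, id] using (tendsto_atTop_add_const_right _ (-ρ.im)
        tendsto_id).atTop_div_const (neg_pos.mpr (hq ρ hρ))
  rw [Multiset.map_const', Multiset.sum_replicate, nsmul_eq_mul] at this
  exact this

variable {p0 p1 : ℝ[X]}

lemma eval_eq_zero_of_cos_phase_eq_sin
    (hq : ∀ ρ ∈ (p0.comp (-X ^ 2) - X * p1.comp (-X ^ 2)).aroots ℂ, ρ.re < 0) {x : ℝ}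
    (hx : Real.cos (phase (p0.comp (-X ^ 2) - X * p1.comp (-X ^ 2)) x) =
      Real.sin (phase (p0.comp (-X ^ 2) - X * p1.comp (-X ^ 2)) x)) :
    (p0.comp (X ^ 2) + X * p1.comp (X ^ 2)).eval x = 0 := by
  obtain ⟨r, hr⟩ := exists_aeval_I_mul_eq hq x
  rw [eval_comp_sq_add_X_mul_eq_re_sub_im, hr, re_ofReal_mul, im_ofReal_mul, exp_ofReal_mul_I_re,
    exp_ofReal_mul_I_im, hx, sub_self]

theorem exists_isSelfInterlacing_of_re_neg {n : ℕ}
    (hm : (p0.comp (X ^ 2) + X * p1.comp (X ^ 2)).Monic)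
    (hdeg : (p0.comp (X ^ 2) + X * p1.comp (X ^ 2)).natDegree = n)
    (hq : ∀ ρ ∈ (p0.comp (-X ^ 2) - X * p1.comp (-X ^ 2)).aroots ℂ, ρ.re < 0) :
    ∃ lam : Fin n → ℝ,
      p0.comp (X ^ 2) + X * p1.comp (X ^ 2) = ∏ i, (X - C (lam i)) ∧ IsSelfInterlacing lam := by
  set q := p0.comp (-X ^ 2) - X * p1.comp (-X ^ 2)
  have hcard : n ≤ Multiset.card (q.aroots ℂ) := by
    rw [IsAlgClosed.card_aroots_eq_natDegree, ← hdeg]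
    exact natDegree_comp_sq_add_X_mul_le p0 p1
  have htarget (k : Fin n) : ∃ x, 0 < x ∧ phase q x = (2 * k + 1) * π / 4 := by
    refine exists_pos_eq_of_tendsto_atTop (continuous_phase q) (by rw [phase_zero]; positivity)
      (tendsto_phase_atTop hq) ?_
    have : (k : ℝ) + 1 ≤ Multiset.card (q.aroots ℂ) := by exact_mod_cast k.isLt.trans_le hcard
    nlinarith [Real.pi_pos]
  choose x hxpos hx using htarget
  have hxmono : StrictMono x := fun i j hij => by
    have hne : q.aroots ℂ ≠ 0 := Multiset.card_pos.mp (j.pos.trans_le hcard)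
    rw [← (phase_strictMono hq hne).lt_iff_lt, hx, hx]
    gcongr
    exact_mod_cast hij
  have hlam := IsSelfInterlacing.of_strictMono hxmono hxpos
  refine ⟨_, eq_prod_X_sub_C_of_injective hm hdeg hlam.injective fun k => ?_, hlam⟩
  apply eval_eq_zero_of_cos_phase_eq_sin hq
  rw [phase_neg_one_pow_mul, hx]
  exact Real.cos_eq_sin_neg_one_pow_mul k

end Polynomial

theorem schwarz_stmt9_general {n : ℕ} (p p0 p1 : Polynomial ℝ) (hm : p.Monic)
    (hdeg : p.natDegree = n)
    (hp : p = p0.comp (Polynomial.X ^ 2) + Polynomial.X * p1.comp (Polynomial.X ^ 2)) :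
    (∃ lam : Fin n → ℝ,
        p = ∏ i, (Polynomial.X - Polynomial.C (lam i)) ∧
        StrictMono (fun i : Fin n => (-1 : ℝ) ^ (i : ℕ) * lam i) ∧
        ∀ i : Fin n, 0 < (-1 : ℝ) ^ (i : ℕ) * lam i) ↔
      ∀ z ∈ cRoots (p0.comp (-(Polynomial.X ^ 2)) -
          Polynomial.X * p1.comp (-(Polynomial.X ^ 2))), z.re < 0 := by
  subst hp
  constructor
  · rintro ⟨lam, hfact, hmono, hpos⟩ z hz
    exact IsSelfInterlacing.re_neg_of_mem_aroots ⟨hmono, hpos⟩ hfact hz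
  · intro hq
    obtain ⟨lam, hfact, hlam⟩ := exists_isSelfInterlacing_of_re_neg hm hdeg hq
    exact ⟨lam, hfact, hlam.strictMono, hlam.pos⟩

/-- a real monic polynomial `p(z) = p₀(z²) + z·p₁(z²)` of degree `n` is
self-interlacing of type I iff `q(z) = p₀(-z²) - z·p₁(-z²)` is Hurwitz stable. -/
theorem schwarz_stmt9 {n : ℕ} (hn : 0 < n) (p p0 p1 : Polynomial ℝ) (hm : p.Monic)
    (hdeg : p.natDegree = n)
    (hp : p = p0.comp (Polynomial.X ^ 2) + Polynomial.X * p1.comp (Polynomial.X ^ 2)) :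
    (∃ lam : Fin n → ℝ,
        p = ∏ i, (Polynomial.X - Polynomial.C (lam i)) ∧
        StrictMono (fun i : Fin n => (-1 : ℝ) ^ (i : ℕ) * lam i) ∧
        ∀ i : Fin n, 0 < (-1 : ℝ) ^ (i : ℕ) * lam i) ↔
      ∀ z ∈ cRoots (p0.comp (-(Polynomial.X ^ 2)) -
          Polynomial.X * p1.comp (-(Polynomial.X ^ 2))), z.re < 0 :=
  schwarz_stmt9_general p p0 p1 hm hdeg hp
end
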